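/- arXiv:1405.1484 — 2 statements merged into one kernel-verified Lean document; each statement's English description precedes it below -/
import Mathlib

section
/- Let n ≥ 3 be a prime and let G be the graph of Construction 1. For each i ∈ [n−1], the set R_i = {u_{i,1},…,u_{i,n}} is an independent set of the square G² of G; that is, no two distinct vertices of R_i have a common neighbor in G. -/
open SimpleGraph

/-- Entry of the Latin square `L_i`:  `L_i(j,k) ≡ j + i·(k-1) (mod n)`, with
indices and entries taken in `ZMod n` (identifying `[n] = {1,…,n}` with `ZMod n`). -/
def latinL (n : ℕ) (i j k : ZMod n) : ZMod n := j + i * (k - 1)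

/-- The vertices of the graph `G` of Construction 1:
`pv k m l` is `v_{k,m}^l ∈ P`, `qv i j` is `w_{i,j} ∈ Q` (with `i ≠ 0`, i.e. `i ∈ [n-1]`),
`rv i j` is `u_{i,j} ∈ R`, and `sv m` is `s_m ∈ S`. -/
inductive Vert (n : ℕ) : Type
  | pv (k m l : ZMod n) : Vert n
  | qv (i : {x : ZMod n // x ≠ 0}) (j : ZMod n) : Vert n
  | rv (i : {x : ZMod n // x ≠ 0}) (j : ZMod n) : Vert n
  | sv (m : ZMod n) : Vert n

/-- One-directional description of the edges of Construction 1: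
`w_{i,j}` is adjacent to `v_{k, L_i(j,k)}^l` for all `k, l`;
`u_{i,j}` is adjacent to every vertex of `T_{l, L_i(j,l)}` for every `l`;
`s_m` is adjacent to every vertex of `T_{l,m}` for every `l`. -/
def rel {n : ℕ} : Vert n → Vert n → Prop
  | .qv i j, .pv k m _ => m = latinL n i.1 j k
  | .rv i j, .pv _ m l => m = latinL n i.1 j l
  | .sv m', .pv _ m _ => m = m'
  | _, _ => False

/-- The bipartite graph `G` of Construction 1. -/
def GraphG (n : ℕ) : SimpleGraph (Vert n) where
  Adj x y := rel x y ∨ rel y x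
  symm := ⟨fun _ _ h => h.symm⟩
  loopless := ⟨by intro x h; cases x <;> simp [rel] at h⟩

/-- The square `G²` of a graph `G`: two distinct vertices are adjacent iff
their distance in `G` is at most 2 (i.e. they are adjacent or have a common neighbor). -/
def square {V : Type*} (G : SimpleGraph V) : SimpleGraph V where
  Adj x y := x ≠ y ∧ (G.Adj x y ∨ ∃ z, G.Adj x z ∧ G.Adj z y)
  symm := ⟨by
    rintro x y ⟨hxy, h | ⟨z, h1, h2⟩⟩
    · exact ⟨hxy.symm, Or.inl h.symm⟩
    · exact ⟨hxy.symm, Or.inr ⟨z, h2.symm, h1.symm⟩⟩⟩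
  loopless := ⟨fun x h => h.1 rfl⟩

/-- `P_k^l = {v_{k,1}^l, …, v_{k,n}^l}`. -/
def Pkl (n : ℕ) (k l : ZMod n) : Set (Vert n) := {x | ∃ m, x = Vert.pv k m l}

/-- `P^l = P_1^l ∪ ⋯ ∪ P_n^l`. -/
def PlSet (n : ℕ) (l : ZMod n) : Set (Vert n) := {x | ∃ k m, x = Vert.pv k m l}

/-- `P = P^1 ∪ ⋯ ∪ P^n`. -/
def Pset (n : ℕ) : Set (Vert n) := {x | ∃ k m l, x = Vert.pv k m l}

/-- `T_{l,m} = {v_{1,m}^l, …, v_{n,m}^l}`. -/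
def Tlm (n : ℕ) (l m : ZMod n) : Set (Vert n) := {x | ∃ k, x = Vert.pv k m l}

/-- `Q_i = {w_{i,1}, …, w_{i,n}}`. -/
def QiSet (n : ℕ) (i : {x : ZMod n // x ≠ 0}) : Set (Vert n) := {x | ∃ j, x = Vert.qv i j}

/-- `Q = Q_1 ∪ ⋯ ∪ Q_{n-1}`. -/
def Qset (n : ℕ) : Set (Vert n) := {x | ∃ i j, x = Vert.qv i j}

/-- `R_i = {u_{i,1}, …, u_{i,n}}`. -/
def RiSet (n : ℕ) (i : {x : ZMod n // x ≠ 0}) : Set (Vert n) := {x | ∃ j, x = Vert.rv i j}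

/-- `R = R_1 ∪ ⋯ ∪ R_{n-1}`. -/
def Rset (n : ℕ) : Set (Vert n) := {x | ∃ i j, x = Vert.rv i j}

/-- `S = {s_1, …, s_n}`. -/
def Sset (n : ℕ) : Set (Vert n) := {x | ∃ m, x = Vert.sv m}

/-- `G_l`, the subgraph of `G` induced by `P^l ∪ Q` (kept on the same vertex type:
all edges of `G` with both endpoints in `P^l ∪ Q`). -/
def Gl (n : ℕ) (l : ZMod n) : SimpleGraph (Vert n) where
  Adj x y := (GraphG n).Adj x y ∧ x ∈ PlSet n l ∪ Qset n ∧ y ∈ PlSet n l ∪ Qset n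
  symm := ⟨fun _ _ ⟨h, hx, hy⟩ => ⟨h.symm, hy, hx⟩⟩
  loopless := ⟨fun x h => (GraphG n).loopless.irrefl x h.1⟩

/-- `G` is `k`-choosable: for every list assignment with all lists of size at least `k`
there is a proper coloring choosing each color from the corresponding list. -/
def Choosable {V : Type*} (G : SimpleGraph V) (k : ℕ) : Prop :=
  ∀ L : V → Finset ℕ, (∀ v, k ≤ (L v).card) →
    ∃ φ : V → ℕ, (∀ v, φ v ∈ L v) ∧ ∀ ⦃v w⦄, G.Adj v w → φ v ≠ φ w

/-- The list chromatic number `χ_ℓ(G)`: the least `k` such that `G` is `k`-choosable. -/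
noncomputable def listChromaticNumber {V : Type*} (G : SimpleGraph V) : ℕ :=
  sInf {k | Choosable G k}


/- A vertex `u_{i,j}` is adjacent only to `P`-vertices, and its neighbours in each layer `l` form
the transversal `T_{l, L_i(j,l)}`. Two vertices `u_{i,j}, u_{i,j'}` of the same class `R_i` are
therefore non-adjacent, and a common neighbour `v_{k,m}^l` would give
`j + i(l-1) = m = j' + i(l-1)`, i.e. `j = j'`. -/

theorem not_square_adj_of_not_adj_of_no_common_neighbor {V : Type*} {G : SimpleGraph V}
    {x y : V} (hxy : ¬ G.Adj x y) (hcommon : ¬ ∃ z, G.Adj x z ∧ G.Adj y z) :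
    ¬ (square G).Adj x y := by
  rintro ⟨-, hadj | ⟨z, hxz, hzy⟩⟩
  · exact hxy hadj
  · exact hcommon ⟨z, hxz, hzy.symm⟩

theorem GraphG.not_adj_rv_rv {n : ℕ} (i i' : {x : ZMod n // x ≠ 0}) (j j' : ZMod n) :
    ¬ (GraphG n).Adj (.rv i j) (.rv i' j') :=
  fun h => h.elim id id

theorem GraphG.eq_of_adj_rv_of_adj_rv {n : ℕ} {i : {x : ZMod n // x ≠ 0}} {j j' : ZMod n}
    {z : Vert n} (h : (GraphG n).Adj (.rv i j) z) (h' : (GraphG n).Adj (.rv i j') z) :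
    j = j' := by
  cases z with
  | pv _ m l =>
    simp only [GraphG, rel, latinL, or_false] at h h'
    exact add_right_cancel (h.symm.trans h')
  | _ => exact (h.elim id id : False).elim

theorem stmt_8_general (n : ℕ) (i : {x : ZMod n // x ≠ 0}) :
    ∀ x ∈ RiSet n i, ∀ y ∈ RiSet n i, x ≠ y →
      ¬ (square (GraphG n)).Adj x y ∧
      ¬ ∃ z, (GraphG n).Adj x z ∧ (GraphG n).Adj y z := by
  rintro x ⟨j, rfl⟩ y ⟨j', rfl⟩ hjj'
  have hcommon : ¬ ∃ z, (GraphG n).Adj (.rv i j) z ∧ (GraphG n).Adj (.rv i j') z :=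
    fun ⟨_, h, h'⟩ => hjj' (congrArg _ (GraphG.eq_of_adj_rv_of_adj_rv h h'))
  exact ⟨not_square_adj_of_not_adj_of_no_common_neighbor (GraphG.not_adj_rv_rv i i j j') hcommon,
    hcommon⟩

/-- each `R_i` is an independent set of `G²`: distinct vertices of `R_i`
are non-adjacent in `G²`, i.e. they have no common neighbor in `G`. -/
theorem stmt_8 (n : ℕ) (hn : n.Prime) (hn3 : 3 ≤ n) (i : {x : ZMod n // x ≠ 0}) :
    ∀ x ∈ RiSet n i, ∀ y ∈ RiSet n i, x ≠ y →
      ¬ (square (GraphG n)).Adj x y ∧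
      ¬ ∃ z, (GraphG n).Adj x z ∧ (GraphG n).Adj y z :=
  stmt_8_general n i
end

section
/- Let n ≥ 3 be a prime and let G be the graph of Construction 1. Then the subgraph of G² induced by P = P^1 ∪ ⋯ ∪ P^n is isomorphic to the complete multipartite graph K_{n*n²} whose n² partite sets are the sets P_k^l for k, l ∈ [n]; equivalently, two distinct vertices v_{k,j}^l and v_{k',j'}^{l'} of P are adjacent in G² if and only if (k,l) ≠ (k',l'). -/
open SimpleGraph

/-!
Vertices of `P` are never adjacent in `G`, so adjacency in `G²` means a common neighbour.
Every `w_{i,j}`, `u_{i,j}` and `s_m` has exactly one neighbour in each `P_k^l`, hence each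
part stays independent in `G²`. Conversely, for `v_{k,j}^l` and `v_{k',j'}^{l'}` in distinct
parts: if `j = j'` then `s_j` is a common neighbour; otherwise, since `ZMod n` is a field, the
points `(k, j)`, `(k', j')` (or `(l, j)`, `(l', j')` when `k = k'`) lie on a line
`y = j₀ + i (x - 1)` of nonzero slope `i`, and `w_{i,j₀}` (resp. `u_{i,j₀}`) joins them.
-/

namespace SimpleGraph

def Iso.completeMultipartiteGraphOfEquiv {V ι : Type*} {β : ι → Type*} {G : SimpleGraph V}
    (e : V ≃ Σ i, β i) (h : ∀ x y, G.Adj x y ↔ (e x).1 ≠ (e y).1) :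
    G ≃g completeMultipartiteGraph β :=
  ⟨e, fun {x y} => (h x y).symm⟩

def Iso.completeMultipartiteGraphCongr {ι ι' : Type*} {β : ι → Type*} {β' : ι' → Type*}
    (f : ι ≃ ι') (F : ∀ i, β i ≃ β' (f i)) :
    completeMultipartiteGraph β ≃g completeMultipartiteGraph β' :=
  ⟨Equiv.sigmaCongr f F, fun {_ _} => f.injective.ne_iff⟩

end SimpleGraph

namespace Construction1

variable {n : ℕ}

lemma not_adj_pv_pv (k j l k' j' l' : ZMod n) :
    ¬(GraphG n).Adj (.pv k j l) (.pv k' j' l') := by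
  simp [GraphG, rel]

lemma eq_of_adj_pv_of_adj_pv {z : Vert n} {k j j' l : ZMod n}
    (h : (GraphG n).Adj z (.pv k j l)) (h' : (GraphG n).Adj z (.pv k j' l)) : j = j' := by
  cases z <;> simp only [GraphG, rel, or_false] at h h' <;> exact h.trans h'.symm

lemma exists_latinL_eq_of_ne [Fact n.Prime] {a a' b b' : ZMod n} (ha : a ≠ a') (hb : b ≠ b') :
    ∃ (i : {x : ZMod n // x ≠ 0}) (j : ZMod n),
      b = latinL n i.1 j a ∧ b' = latinL n i.1 j a' := by
  have ha' : a - a' ≠ 0 := sub_ne_zero.mpr ha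
  refine ⟨⟨(b - b') / (a - a'), div_ne_zero (sub_ne_zero.mpr hb) ha'⟩,
    b - (b - b') / (a - a') * (a - 1), by simp [latinL], ?_⟩
  simp only [latinL]
  field_simp
  ring

lemma exists_common_neighbor_pv [Fact n.Prime] {k j l k' j' l' : ZMod n}
    (h : (k, l) ≠ (k', l')) :
    ∃ z, (GraphG n).Adj (.pv k j l) z ∧ (GraphG n).Adj z (.pv k' j' l') := by
  by_cases hj : j = j'
  · exact ⟨.sv j, Or.inr rfl, Or.inl hj.symm⟩
  by_cases hk : k = k'
  · have hl : l ≠ l' := fun hl => h (by rw [hk, hl])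
    obtain ⟨i, j₀, e, e'⟩ := exists_latinL_eq_of_ne hl hj
    exact ⟨.rv i j₀, Or.inr e, Or.inl e'⟩
  · obtain ⟨i, j₀, e, e'⟩ := exists_latinL_eq_of_ne hk hj
    exact ⟨.qv i j₀, Or.inr e, Or.inl e'⟩

theorem square_adj_pv_iff [Fact n.Prime] (k j l k' j' l' : ZMod n) :
    (square (GraphG n)).Adj (.pv k j l) (.pv k' j' l') ↔ (k, l) ≠ (k', l') := by
  constructor
  · rintro ⟨hne, hadj | ⟨z, h, h'⟩⟩ heq
    · exact not_adj_pv_pv _ _ _ _ _ _ hadj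
    · obtain ⟨rfl, rfl⟩ : k = k' ∧ l = l' := Prod.ext_iff.mp heq
      exact hne (by rw [eq_of_adj_pv_of_adj_pv h.symm h'])
  · intro h
    exact ⟨fun heq => h (by cases heq; rfl), Or.inr (exists_common_neighbor_pv h)⟩

def pSetEquiv (n : ℕ) : Pset n ≃ Σ _ : ZMod n × ZMod n, ZMod n where
  toFun x := match x with
    | ⟨.pv k m l, _⟩ => ⟨(k, l), m⟩
    | _ => ⟨(0, 0), 0⟩
  invFun y := ⟨.pv y.1.1 y.2 y.1.2, _, _, _, rfl⟩
  left_inv := by rintro ⟨_, k, m, l, rfl⟩; rfl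
  right_inv _ := rfl

theorem square_induce_pset_adj_iff [Fact n.Prime] (x y : Pset n) :
    ((square (GraphG n)).induce (Pset n)).Adj x y ↔ (pSetEquiv n x).1 ≠ (pSetEquiv n y).1 := by
  obtain ⟨_, k, m, l, rfl⟩ := x
  obtain ⟨_, k', m', l', rfl⟩ := y
  exact square_adj_pv_iff k m l k' m' l'

end Construction1

open Construction1

theorem stmt_13_general (n : ℕ) (hn : n.Prime) :
    Nonempty ((square (GraphG n)).induce (Pset n) ≃g
      completeMultipartiteGraph (fun _ : Fin n × Fin n => Fin n)) ∧
    ∀ k j l k' j' l' : ZMod n,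
      ((square (GraphG n)).Adj (Vert.pv k j l) (Vert.pv k' j' l') ↔ (k, l) ≠ (k', l')) := by
  have : Fact n.Prime := ⟨hn⟩
  have : NeZero n := ⟨hn.ne_zero⟩
  let e : ZMod n ≃ Fin n := (ZMod.finEquiv n).symm.toEquiv
  exact ⟨⟨(Iso.completeMultipartiteGraphOfEquiv (pSetEquiv n) square_induce_pset_adj_iff).trans
    (Iso.completeMultipartiteGraphCongr (e.prodCongr e) fun _ => e)⟩, square_adj_pv_iff⟩

/-- the subgraph of `G²` induced by `P` is isomorphic to the complete
multipartite graph `K_{n*n²}` with the `n²` partite sets `P_k^l`; equivalently, distinct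
vertices `v_{k,j}^l` and `v_{k',j'}^{l'}` are adjacent in `G²` iff `(k,l) ≠ (k',l')`. -/
theorem stmt_13 (n : ℕ) (hn : n.Prime) (hn3 : 3 ≤ n) :
    Nonempty ((square (GraphG n)).induce (Pset n) ≃g
      completeMultipartiteGraph (fun _ : Fin n × Fin n => Fin n)) ∧
    ∀ k j l k' j' l' : ZMod n,
      ((square (GraphG n)).Adj (Vert.pv k j l) (Vert.pv k' j' l') ↔ (k, l) ≠ (k', l')) :=
  stmt_13_general n hn
end
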